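/- Let G be a finite simple graph and H a subgraph of G that is contractible in itself. Let G' be the graph obtained from G by adding a new vertex x joined to exactly the vertices of H (pyramid extension over H). Then χ(G') = χ(G). -/

import Mathlib

noncomputable def cfilter {V : Type*} (p : V → Prop) (s : Finset V) : Finset V :=
  @Finset.filter _ p (Classical.decPred p) s

lemma cfilter_card_lt {V : Type*} {p : V → Prop} {s : Finset V} {x : V} (hx : x ∈ s)
    (hpx : ¬ p x) : (cfilter p s).card < s.card := by
  classical
  refine Finset.card_lt_card ?_
  unfold cfilter
  rw [Finset.filter_congr_decidable]
  exact (Finset.ssubset_iff_of_subset (Finset.filter_subset _ _)).mpr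
    ⟨x, hx, fun h => hpx (Finset.mem_filter.mp h).2⟩

/-- Ivashchenko contractibility (in itself) of the subgraph of `G` induced on the finite
vertex set `s`: either `s` is a single vertex, or there is an injective function `f` on `s`
such that for every non-minimal vertex `x` the down-sphere `S⁻_f(x)` (the neighbours of `x`
in `s` with smaller `f`-value) is contractible in itself. -/
def Contractible {V : Type*} (G : SimpleGraph V) (s : Finset V) : Prop :=
  s.card = 1 ∨ (1 < s.card ∧ ∃ f : V → ℝ, Set.InjOn f ↑s ∧
    ∀ x ∈ s, (∃ y ∈ s, f y < f x) →
      Contractible G (cfilter (fun y => G.Adj x y ∧ f y < f x) s))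
termination_by s.card
decreasing_by
  rename_i hx hlt
  exact cfilter_card_lt hx (fun h => G.loopless.irrefl x h.1)

/-- Euler characteristic of the subgraph of `G` induced on the finite vertex set `s`:
the alternating sum `Σ_k (-1)^k v_k`, where `v_k` is the number of `(k+1)`-cliques of `G`
contained in `s`. -/
noncomputable def echar {V : Type*} (G : SimpleGraph V) (s : Finset V) : ℤ :=
  ∑ k ∈ Finset.range (s.card + 1),
    (-1 : ℤ) ^ k *
      (Nat.card {t : Finset V // t ⊆ s ∧ t.card = k + 1 ∧ G.IsClique (t : Set V)} : ℤ)

/-- The pyramid extension (cone) of `G` over the vertex set `s`: a new vertex (`none`) is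
joined to exactly the vertices of `s`. -/
def coneOver {V : Type*} (G : SimpleGraph V) (s : Set V) : SimpleGraph (Option V) where
  Adj a b :=
    match a, b with
    | some x, some y => G.Adj x y
    | some x, none => x ∈ s
    | none, some y => y ∈ s
    | none, none => False
  symm := by
    refine ⟨?_⟩
    rintro (_ | x) (_ | y) h <;> simp_all <;> exact h.symm
  loopless := by
    refine ⟨?_⟩
    rintro (_ | x) h
    · exact h
    · exact G.loopless.irrefl x h

/-!
Adding a vertex `x` to a vertex set `s` creates exactly the cliques `insert x t`, with `t` a clique
(possibly empty) in the sphere of `x`, i.e. its neighbours in `s`; hence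
`χ(insert x s) = χ(s) + 1 - χ(sphere x)`. In a contractible graph, the `f`-maximal vertex `x`
has a contractible sphere, and removing it leaves a contractible graph (with the same `f`), so
induction on the number of vertices gives `χ = 1`. The sphere of the apex of the pyramid
extension is `H`, so `χ(G') = χ(G) + 1 - χ(H) = χ(G)`.
-/

open Finset

section

variable {V W : Type*}

theorem mem_cfilter {p : V → Prop} {s : Finset V} {x : V} : x ∈ cfilter p s ↔ x ∈ s ∧ p x := by
  classical
  rw [cfilter, Finset.filter_congr_decidable, Finset.mem_filter]

open scoped Classical in
/-- Counting the empty clique (with sign `-1`) makes the new cliques of `insert x s` correspond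
exactly to all cliques of the sphere of `x`. -/
noncomputable def reducedEchar (G : SimpleGraph V) (s : Finset V) : ℤ :=
  ∑ t ∈ s.powerset with G.IsClique ((t : Finset V) : Set V), -(-1) ^ #t

open scoped Classical in
theorem natCard_cliques_eq_card (G : SimpleGraph V) (s : Finset V) (k : ℕ) :
    Nat.card {t : Finset V // t ⊆ s ∧ #t = k ∧ G.IsClique ((t : Finset V) : Set V)} =
      #{t ∈ s.powersetCard k | G.IsClique ((t : Finset V) : Set V)} := by
  rw [← Nat.card_eq_finsetCard]
  exact Nat.card_congr <| Equiv.subtypeEquivRight fun t => by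
    rw [mem_filter, mem_powersetCard, and_assoc]

theorem echar_eq_reducedEchar_add_one (G : SimpleGraph V) (s : Finset V) :
    echar G s = reducedEchar G s + 1 := by
  classical
  set F : ℕ → ℤ := fun j =>
    ∑ t ∈ s.powersetCard j with G.IsClique ((t : Finset V) : Set V), -(-1) ^ j
  have hechar : echar G s = ∑ k ∈ range (#s + 1), F (k + 1) := by
    refine sum_congr rfl fun k _ => ?_
    simp only [F, natCard_cliques_eq_card, sum_const, nsmul_eq_mul]
    ring
  have hreduced : reducedEchar G s = ∑ j ∈ range (#s + 1), F j := by
    rw [reducedEchar, sum_filter, sum_powerset]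
    refine sum_congr rfl fun j _ => ?_
    simp only [F, sum_filter]
    exact sum_congr rfl fun t ht => by rw [(mem_powersetCard.mp ht).2]
  have hF_zero : F 0 = -1 := by simp [F, filter_singleton]
  have hF_top : F (#s + 1) = 0 := by simp [F, powersetCard_eq_empty.mpr (Nat.lt_succ_self _)]
  rw [hechar, hreduced, sum_range_succ, sum_range_succ' F, hF_zero, hF_top]
  ring

theorem reducedEchar_insert [DecidableEq V] (G : SimpleGraph V) {s : Finset V} {x : V}
    (hx : x ∉ s) :
    reducedEchar G (insert x s) = reducedEchar G s - reducedEchar G (cfilter (G.Adj x) s) := by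
  classical
  set N := cfilter (G.Adj x) s
  have hN : N ⊆ s := fun y hy => (mem_cfilter.mp hy).1
  have hcone : ∀ t ∈ s.powerset,
      G.IsClique ((insert x t : Finset V) : Set V) ↔ t ∈ N.powerset ∧ G.IsClique (t : Set V) := by
    intro t ht
    have hxt : ∀ y ∈ t, x ≠ y := fun y hy hxy => hx (mem_powerset.mp ht (hxy ▸ hy))
    simp only [coe_insert, SimpleGraph.isClique_insert, mem_powerset, N, subset_iff, mem_cfilter]
    grind
  have hcard : ∀ t ∈ s.powerset, #(insert x t) = #t + 1 := fun t ht =>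
    card_insert_of_notMem fun hxt => hx (mem_powerset.mp ht hxt)
  simp only [reducedEchar, sum_filter]
  rw [sum_powerset_insert hx, sub_eq_add_neg, ← sum_neg_distrib,
    ← inter_eq_right.mpr (powerset_mono.mpr hN), ← sum_ite_mem]
  congr 1
  refine sum_congr rfl fun t ht => ?_
  simp only [hcone t ht, hcard t ht, ite_and]
  split_ifs <;> ring

theorem echar_insert [DecidableEq V] (G : SimpleGraph V) {s : Finset V} {x : V} (hx : x ∉ s) :
    echar G (insert x s) = echar G s + 1 - echar G (cfilter (G.Adj x) s) := by
  rw [echar_eq_reducedEchar_add_one, echar_eq_reducedEchar_add_one,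
    echar_eq_reducedEchar_add_one, reducedEchar_insert G hx]
  ring

theorem cfilter_empty (p : V → Prop) : cfilter p ∅ = ∅ := by
  ext y
  simp [mem_cfilter]

theorem echar_empty (G : SimpleGraph V) : echar G ∅ = 0 := by
  simp [echar_eq_reducedEchar_add_one, reducedEchar, filter_singleton]

theorem echar_singleton (G : SimpleGraph V) (a : V) : echar G {a} = 1 := by
  classical
  rw [← insert_empty, echar_insert G (notMem_empty a), cfilter_empty, echar_empty]
  norm_num

theorem cfilter_erase_of_not [DecidableEq V] {p : V → Prop} {s : Finset V} {x : V} (hx : ¬ p x) :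
    cfilter p (s.erase x) = cfilter p s := by
  ext y
  simp only [mem_cfilter, mem_erase]
  exact ⟨fun h => ⟨h.1.2, h.2⟩, fun h => ⟨⟨fun hyx => hx (hyx ▸ h.2), h.1⟩, h.2⟩⟩

theorem cfilter_congr {p q : V → Prop} {s : Finset V} (h : ∀ y ∈ s, p y ↔ q y) :
    cfilter p s = cfilter q s := by
  ext y
  simp only [mem_cfilter]
  exact ⟨fun hy => ⟨hy.1, (h y hy.1).mp hy.2⟩, fun hy => ⟨hy.1, (h y hy.1).mpr hy.2⟩⟩

theorem SimpleGraph.Embedding.isClique_image_iff {G : SimpleGraph V} {G' : SimpleGraph W}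
    (φ : G ↪g G') {s : Set V} : G'.IsClique (φ '' s) ↔ G.IsClique s := by
  rw [SimpleGraph.IsClique, φ.injective.injOn.pairwise_image]
  exact ⟨fun h _ ha _ hb hab => φ.map_adj_iff.mp (h ha hb hab),
    fun h _ ha _ hb hab => φ.map_adj_iff.mpr (h ha hb hab)⟩

theorem echar_map {G : SimpleGraph V} {G' : SimpleGraph W} (φ : G ↪g G') (s : Finset V) :
    echar G' (s.map φ.toEmbedding) = echar G s := by
  classical
  simp only [echar, card_map, natCard_cliques_eq_card, powersetCard_map, filter_map]
  refine sum_congr rfl fun k _ => ?_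
  congr 3
  refine filter_congr fun t _ => ?_
  rw [Function.comp_apply, RelEmbedding.coe_toEmbedding, mapEmbedding_apply, coe_map]
  exact φ.isClique_image_iff

theorem contractible_erase_of_forall_lt [DecidableEq V] {G : SimpleGraph V} {s : Finset V}
    {f : V → ℝ} {x : V} (hinj : Set.InjOn f s)
    (hdown : ∀ y ∈ s, (∃ z ∈ s, f z < f y) →
      Contractible G (cfilter (fun z => G.Adj y z ∧ f z < f y) s))
    (hcard : 1 < #s) (hmax : ∀ y ∈ s.erase x, f y < f x) : Contractible G (s.erase x) := by
  have hpos : 1 ≤ #(s.erase x) := by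
    have := pred_card_le_card_erase (s := s) (a := x)
    omega
  rw [Contractible]
  obtain hone | hlt := hpos.eq_or_lt
  · exact Or.inl hone.symm
  refine Or.inr ⟨hlt, f, hinj.mono (coe_subset.mpr (erase_subset x s)),
    fun y hy ⟨z, hz, hzy⟩ => ?_⟩
  rw [cfilter_erase_of_not fun h => (hmax y hy).asymm h.2]
  exact hdown y (mem_of_mem_erase hy) ⟨z, mem_of_mem_erase hz, hzy⟩

theorem Contractible.echar_eq_one {G : SimpleGraph V} {s : Finset V} (hs : Contractible G s) :
    echar G s = 1 := by
  classical
  induction hn : #s using Nat.strong_induction_on generalizing s with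
  | _ n ih =>
  rw [Contractible] at hs
  obtain hone | ⟨hcard, f, hinj, hdown⟩ := hs
  · obtain ⟨a, rfl⟩ := card_eq_one.mp hone
    exact echar_singleton G a
  obtain ⟨x, hx, hxmax⟩ := exists_max_image s f (card_pos.mp (by omega))
  have hmax : ∀ y ∈ s.erase x, f y < f x := fun y hy =>
    (hxmax y (mem_of_mem_erase hy)).lt_of_ne fun h =>
      ne_of_mem_erase hy (hinj (mem_of_mem_erase hy) hx h)
  have hsphere : cfilter (fun y => G.Adj x y ∧ f y < f x) s = cfilter (G.Adj x) (s.erase x) := by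
    rw [← cfilter_erase_of_not fun h => (lt_irrefl _ h.2)]
    exact cfilter_congr fun y hy => and_iff_left (hmax y hy)
  have herase_lt : #(s.erase x) < n := hn ▸ card_erase_lt_of_mem hx
  have hsphere_lt : #(cfilter (G.Adj x) (s.erase x)) < n :=
    (card_le_card fun y hy => (mem_cfilter.mp hy).1).trans_lt herase_lt
  obtain ⟨y, hy⟩ : (s.erase x).Nonempty := card_pos.mp (by rw [card_erase_of_mem hx]; omega)
  have hsphere_contractible : Contractible G (cfilter (G.Adj x) (s.erase x)) :=
    hsphere ▸ hdown x hx ⟨y, mem_of_mem_erase hy, hmax y hy⟩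
  rw [← insert_erase hx, echar_insert G (notMem_erase x s),
    ih _ herase_lt (contractible_erase_of_forall_lt hinj hdown hcard hmax) rfl,
    ih _ hsphere_lt hsphere_contractible rfl]
  norm_num

def coneOverEmbedding (G : SimpleGraph V) (S : Set V) : G ↪g coneOver G S where
  toEmbedding := Function.Embedding.some
  map_rel_iff' := Iff.rfl

theorem cfilter_coneOver_adj_none (G : SimpleGraph V) (S : Set V) (t : Finset V) :
    cfilter ((coneOver G S).Adj none) (t.map Function.Embedding.some) =
      (cfilter (· ∈ S) t).map Function.Embedding.some := by
  ext (_ | a)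
  · simp [mem_cfilter]
  · simp [mem_cfilter, coneOver]

theorem echar_coneOver_univ [Fintype V] (G : SimpleGraph V) (s : Finset V) :
    echar (coneOver G s) univ = echar G univ + 1 - echar G s := by
  classical
  have huniv : (univ : Finset (Option V)) = insert none (univ.map Function.Embedding.some) := by
    ext (_ | a) <;> simp
  have hs : cfilter (· ∈ (s : Set V)) univ = s := by
    ext a
    simp [mem_cfilter]
  rw [huniv, echar_insert _ (by simp), cfilter_coneOver_adj_none, hs]
  exact congrArg₂ (fun a b => a + 1 - b) (echar_map (coneOverEmbedding G s) univ)
    (echar_map (coneOverEmbedding G s) s)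

end

/-- If `H` (induced on the vertex set `s`) is a contractible-in-itself
subgraph of `G`, then the pyramid extension of `G` over `H` has the same Euler
characteristic as `G`. -/
theorem euler_pyramid_extension {V : Type*} [Fintype V] (G : SimpleGraph V) (s : Finset V)
    (hs : Contractible G s) :
    echar (coneOver G (s : Set V)) Finset.univ = echar G Finset.univ := by
  rw [echar_coneOver_univ, hs.echar_eq_one]
  ring
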